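/- arXiv:1203.6660 — 5 statements merged into one kernel-verified Lean document; each statement's English description precedes it below -/
import Mathlib

section
/- For real t, y with t² > y², the function v(t,y) = (I_0(√(t²−y²)) − J_0(√(t²−y²)))/2 satisfies ∂²v/∂t² − ∂²v/∂y² = u(t,y), where u(t,y) = (I_0(√(t²−y²)) + J_0(√(t²−y²)))/2. Consequently both u and v satisfy the fourth-order equation (∂²/∂t² − ∂²/∂y²)² w = w. -/
open Real


/-- Modified Bessel function of the first kind, order 0. -/
noncomputable def besselI0 (r : ℝ) : ℝ :=
  ∑' k : ℕ, (r / 2) ^ (2 * k) / ((Nat.factorial k : ℝ)) ^ 2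

/-- Bessel function of the first kind, order 0. -/
noncomputable def besselJ0 (r : ℝ) : ℝ :=
  ∑' k : ℕ, (-1 : ℝ) ^ k * (r / 2) ^ (2 * k) / ((Nat.factorial k : ℝ)) ^ 2

/-- Modified Bessel function of the first kind, order 1. -/
noncomputable def besselI1 (r : ℝ) : ℝ :=
  ∑' k : ℕ, (r / 2) ^ (2 * k + 1) / ((Nat.factorial k : ℝ) * (Nat.factorial (k + 1)))

/-- Bessel function of the first kind, order 1. -/
noncomputable def besselJ1 (r : ℝ) : ℝ :=
  ∑' k : ℕ, (-1 : ℝ) ^ k * (r / 2) ^ (2 * k + 1) / ((Nat.factorial k : ℝ) * (Nat.factorial (k + 1)))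

/-- Modified Bessel function of the first kind, order 2. -/
noncomputable def besselI2 (r : ℝ) : ℝ :=
  ∑' k : ℕ, (r / 2) ^ (2 * k + 2) / ((Nat.factorial k : ℝ) * (Nat.factorial (k + 2)))

/-- Bessel function of the first kind, order 2. -/
noncomputable def besselJ2 (r : ℝ) : ℝ :=
  ∑' k : ℕ, (-1 : ℝ) ^ k * (r / 2) ^ (2 * k + 2) / ((Nat.factorial k : ℝ) * (Nat.factorial (k + 2)))

/-- The wave (d'Alembert) operator `∂²/∂t² − ∂²/∂y²`. -/
noncomputable def waveOp (f : ℝ → ℝ → ℝ) : ℝ → ℝ → ℝ := fun t y =>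
  deriv (fun s => deriv (fun s' => f s' y) s) t -
    deriv (fun s => deriv (fun s' => f t s') s) y

/-!
Write `s = t² - y²`. For `w = F(s)` the wave operator acts radially, as `4 F'(s) + 4 s F''(s)`,
and on a power series `∑ cₙ sⁿ` this is `∑ 4 (n + 1)² cₙ₊₁ sⁿ`. On the cone `y² < t²` we have
`I₀(√s) = ∑ sᵏ / (4ᵏ k!²)` and `J₀(√s) = ∑ (-s)ᵏ / (4ᵏ k!²)`; since `4 (k + 1)² / (4ᵏ⁺¹ (k + 1)!²)
= 1 / (4ᵏ k!²)`, the operator fixes `I₀(√s)` and negates `J₀(√s)`, so it swaps `(I₀ ± J₀)(√s) / 2`.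
The wave operator is local and the cone is open, so it can be applied a second time.
-/

open Filter Topology Nat

section PowerSeries

noncomputable def powerSum (c : ℕ → ℝ) (x : ℝ) : ℝ := ∑' n, c n * x ^ n

def derivCoeff (c : ℕ → ℝ) (n : ℕ) : ℝ := (n + 1) * c (n + 1)

def IsFactorialBounded (c : ℕ → ℝ) : Prop := ∃ C, ∀ n, |c n| ≤ C / n !

variable {c : ℕ → ℝ}

theorem IsFactorialBounded.deriv (hc : IsFactorialBounded c) :
    IsFactorialBounded (derivCoeff c) := by
  obtain ⟨C, hC⟩ := hc
  refine ⟨C, fun n => ?_⟩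
  calc |derivCoeff c n| = (n + 1) * |c (n + 1)| := by
        rw [derivCoeff, abs_mul, abs_of_nonneg (by positivity)]
    _ ≤ (n + 1) * (C / (n + 1)!) := by gcongr; exact hC _
    _ = C / n ! := by rw [factorial_succ]; push_cast; field_simp

theorem IsFactorialBounded.summable (hc : IsFactorialBounded c) (x : ℝ) :
    Summable fun n => c n * x ^ n := by
  obtain ⟨C, hC⟩ := hc
  refine .of_norm_bounded ((Real.summable_pow_div_factorial |x|).mul_left C) fun n => ?_
  rw [norm_mul, norm_pow, Real.norm_eq_abs, Real.norm_eq_abs]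
  calc |c n| * |x| ^ n ≤ C / n ! * |x| ^ n := by gcongr; exact hC n
    _ = C * (|x| ^ n / n !) := by ring

theorem IsFactorialBounded.hasDerivAt_powerSum (hc : IsFactorialBounded c) (x : ℝ) :
    HasDerivAt (powerSum c) (powerSum (derivCoeff c) x) x := by
  have ⟨C, hC⟩ := hc
  set R := |x| + 1
  have hR : 1 ≤ R := by simp [R]
  have hx : x ∈ Metric.ball 0 R := by simp [R]
  have hmajor : Summable fun n => C * ((2 * R) ^ n / n !) :=
    (Real.summable_pow_div_factorial _).mul_left C
  have hbound : ∀ n, ∀ z ∈ Metric.ball (0 : ℝ) R,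
      ‖c n * (n * z ^ (n - 1))‖ ≤ C * ((2 * R) ^ n / n !) := by
    intro n z hz
    have hzR : |z| ≤ R := by simpa using (mem_ball_zero_iff.mp hz).le
    have hpow : (n : ℝ) * |z| ^ (n - 1) ≤ 2 ^ n * R ^ n := by
      gcongr
      · exact_mod_cast n.lt_two_pow_self.le
      · exact (pow_le_pow_left₀ (abs_nonneg z) hzR _).trans (pow_le_pow_right₀ hR (n.sub_le 1))
    calc ‖c n * (n * z ^ (n - 1))‖ = |c n| * (n * |z| ^ (n - 1)) := by
          simp
      _ ≤ C / n ! * (2 ^ n * R ^ n) :=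
          mul_le_mul (hC n) hpow (by positivity) ((abs_nonneg _).trans (hC n))
      _ = C * ((2 * R) ^ n / n !) := by rw [mul_pow]; ring
  have hderiv := hasDerivAt_tsum_of_isPreconnected hmajor Metric.isOpen_ball
    (convex_ball 0 R).isPreconnected (fun n z _ => (hasDerivAt_pow n z).const_mul (c n))
    hbound hx (hc.summable x) hx
  have hshift : ∑' n, c n * (n * x ^ (n - 1)) = powerSum (derivCoeff c) x := by
    rw [Summable.tsum_eq_zero_add (.of_norm_bounded hmajor (hbound · x hx))]
    simp only [cast_zero, zero_mul, mul_zero, zero_add, cast_add, cast_one,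
      add_tsub_cancel_right, powerSum, derivCoeff]
    exact tsum_congr fun n => by ring
  exact hshift ▸ hderiv

theorem IsFactorialBounded.mul_of_bounded {ε : ℕ → ℝ} {C : ℝ} (hc : IsFactorialBounded c)
    (hε : ∀ n, |ε n| ≤ C) : IsFactorialBounded fun n => ε n * c n := by
  obtain ⟨D, hD⟩ := hc
  refine ⟨C * D, fun n => ?_⟩
  rw [abs_mul, mul_div_assoc]
  exact mul_le_mul (hε n) (hD n) (abs_nonneg _) ((abs_nonneg _).trans (hε n))

def radialWaveCoeff (c : ℕ → ℝ) (n : ℕ) : ℝ := 4 * (n + 1) ^ 2 * c (n + 1)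

theorem IsFactorialBounded.powerSum_radialWaveCoeff (hc : IsFactorialBounded c) (s : ℝ) :
    4 * powerSum (derivCoeff c) s + 4 * s * powerSum (derivCoeff (derivCoeff c)) s =
      powerSum (radialWaveCoeff c) s := by
  set a : ℕ → ℝ := fun n => derivCoeff c n * s ^ n
  have hshift : ∀ n, s * (derivCoeff (derivCoeff c) n * s ^ n) = (n + 1 : ℕ) * a (n + 1) := by
    intro n
    simp only [a, derivCoeff]
    push_cast
    ring
  have hna : Summable fun n => n * a n :=
    (summable_nat_add_iff 1).1 <| by
      simpa only [hshift] using (hc.deriv.deriv.summable s).mul_left s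
  have hsa : s * powerSum (derivCoeff (derivCoeff c)) s = ∑' n, n * a n := by
    rw [hna.tsum_eq_zero_add, powerSum, ← tsum_mul_left]
    simp only [hshift, Nat.cast_zero, zero_mul, zero_add]
  rw [mul_assoc, hsa, powerSum, ← tsum_mul_left, ← tsum_mul_left,
    ← (hc.deriv.summable s).mul_left 4 |>.tsum_add (hna.mul_left 4)]
  exact tsum_congr fun n => by simp only [a, radialWaveCoeff, derivCoeff]; ring

end PowerSeries

theorem waveOp_comp_sq_sub_sq {F F' F'' : ℝ → ℝ} (hF : ∀ x, HasDerivAt F (F' x) x)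
    (hF' : ∀ x, HasDerivAt F' (F'' x) x) (t y : ℝ) :
    waveOp (fun t y => F (t ^ 2 - y ^ 2)) t y =
      4 * F' (t ^ 2 - y ^ 2) + 4 * (t ^ 2 - y ^ 2) * F'' (t ^ 2 - y ^ 2) := by
  have hsq : ∀ x : ℝ, HasDerivAt (fun x => x ^ 2) (2 * x) x := fun x => by
    simpa using hasDerivAt_pow 2 x
  have ht : ∀ {G G' : ℝ → ℝ}, (∀ x, HasDerivAt G (G' x) x) → ∀ s,
      HasDerivAt (fun s => G (s ^ 2 - y ^ 2)) (G' (s ^ 2 - y ^ 2) * (2 * s)) s :=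
    fun hG s => (hG _).comp s ((hsq s).sub_const _)
  have hy : ∀ {G G' : ℝ → ℝ}, (∀ x, HasDerivAt G (G' x) x) → ∀ s,
      HasDerivAt (fun s => G (t ^ 2 - s ^ 2)) (G' (t ^ 2 - s ^ 2) * -(2 * s)) s :=
    fun hG s => (hG _).comp s ((hsq s).const_sub _)
  have htt := (ht hF' t).fun_mul ((hasDerivAt_id' t).const_mul 2)
  have hyy := (hy hF' y).fun_mul ((hasDerivAt_id' y).const_mul 2).fun_neg
  simp only [waveOp, fun s => (ht hF s).deriv, fun s => (hy hF s).deriv]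
  rw [htt.deriv, hyy.deriv]
  ring

theorem waveOp_congr {f g : ℝ → ℝ → ℝ} {t y : ℝ}
    (h : ∀ᶠ p in 𝓝 (t, y), f p.1 p.2 = g p.1 p.2) : waveOp f t y = waveOp g t y := by
  have ht : (fun s => f s y) =ᶠ[𝓝 t] fun s => g s y :=
    ((Continuous.tendsto (by fun_prop : Continuous fun s : ℝ => (s, y)) t).eventually h :)
  have hy : (fun s => f t s) =ᶠ[𝓝 y] fun s => g t s :=
    ((Continuous.tendsto (by fun_prop : Continuous fun s : ℝ => (t, s)) y).eventually h :)
  simp only [waveOp]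
  rw [ht.deriv.deriv_eq, hy.deriv.deriv_eq]

theorem IsFactorialBounded.waveOp_powerSum {c : ℕ → ℝ} (hc : IsFactorialBounded c) (t y : ℝ) :
    waveOp (fun t y => powerSum c (t ^ 2 - y ^ 2)) t y =
      powerSum (radialWaveCoeff c) (t ^ 2 - y ^ 2) := by
  rw [waveOp_comp_sq_sub_sq hc.hasDerivAt_powerSum hc.deriv.hasDerivAt_powerSum,
    hc.powerSum_radialWaveCoeff]

noncomputable def besselCoeff (k : ℕ) : ℝ := ((4 : ℝ) ^ k * (k ! : ℝ) ^ 2)⁻¹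

theorem besselCoeff_succ (k : ℕ) : 4 * ((k : ℝ) + 1) ^ 2 * besselCoeff (k + 1) = besselCoeff k := by
  simp only [besselCoeff, factorial_succ, pow_succ]
  push_cast
  field_simp

theorem isFactorialBounded_besselCoeff : IsFactorialBounded besselCoeff := by
  refine ⟨1, fun k => ?_⟩
  rw [besselCoeff, abs_of_nonneg (by positivity), one_div]
  apply inv_anti₀ (by positivity)
  calc (k ! : ℝ) = 1 * (1 * k !) := by ring
    _ ≤ 4 ^ k * (k ! * k !) := by
      gcongr
      exacts [one_le_pow₀ (by norm_num), mod_cast k.factorial_pos]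
    _ = 4 ^ k * (k ! : ℝ) ^ 2 := by ring

theorem besselI0_sqrt {s : ℝ} (hs : 0 ≤ s) : besselI0 √s = ∑' k, besselCoeff k * s ^ k := by
  refine tsum_congr fun k => ?_
  rw [pow_mul, div_pow, sq_sqrt hs, div_pow, besselCoeff]
  norm_num
  ring

theorem besselJ0_sqrt {s : ℝ} (hs : 0 ≤ s) :
    besselJ0 √s = ∑' k, (-1) ^ k * besselCoeff k * s ^ k := by
  refine tsum_congr fun k => ?_
  rw [pow_mul, div_pow, sq_sqrt hs, div_pow, besselCoeff]
  norm_num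
  ring

noncomputable def besselMixCoeff (σ : ℝ) (k : ℕ) : ℝ := (1 + σ * (-1) ^ k) / 2 * besselCoeff k

theorem isFactorialBounded_besselMixCoeff (σ : ℝ) : IsFactorialBounded (besselMixCoeff σ) :=
  isFactorialBounded_besselCoeff.mul_of_bounded (C := (1 + |σ|) / 2) fun k => by
    rw [abs_div, abs_two]
    gcongr
    calc |1 + σ * (-1) ^ k| ≤ |1| + |σ * (-1) ^ k| := abs_add_le _ _
      _ = 1 + |σ| := by simp

theorem radialWaveCoeff_besselMixCoeff (σ : ℝ) :
    radialWaveCoeff (besselMixCoeff σ) = besselMixCoeff (-σ) := by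
  funext k
  rw [radialWaveCoeff, besselMixCoeff, besselMixCoeff, ← besselCoeff_succ k]
  ring

theorem besselMix_eq_powerSum (σ : ℝ) {s : ℝ} (hs : 0 ≤ s) :
    (besselI0 √s + σ * besselJ0 √s) / 2 = powerSum (besselMixCoeff σ) s := by
  have hI : HasSum (fun k => besselCoeff k * s ^ k) (besselI0 √s) :=
    besselI0_sqrt hs ▸ (isFactorialBounded_besselCoeff.summable s).hasSum
  have hJ : HasSum (fun k => (-1) ^ k * besselCoeff k * s ^ k) (besselJ0 √s) :=
    besselJ0_sqrt hs ▸ ((isFactorialBounded_besselCoeff.mul_of_bounded (ε := fun k => (-1) ^ k)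
      (C := 1) fun k => by simp).summable s).hasSum
  rw [powerSum, ← ((hI.add (hJ.mul_left σ)).div_const 2).tsum_eq]
  exact tsum_congr fun k => by rw [besselMixCoeff]; ring

noncomputable def besselMix (σ t y : ℝ) : ℝ :=
  (besselI0 √(t ^ 2 - y ^ 2) + σ * besselJ0 √(t ^ 2 - y ^ 2)) / 2

theorem eventually_sq_lt_sq {t y : ℝ} (h : y ^ 2 < t ^ 2) :
    ∀ᶠ p : ℝ × ℝ in 𝓝 (t, y), p.2 ^ 2 < p.1 ^ 2 :=
  (isOpen_lt (by fun_prop) (by fun_prop)).mem_nhds h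

theorem waveOp_besselMix (σ : ℝ) {t y : ℝ} (h : y ^ 2 < t ^ 2) :
    waveOp (besselMix σ) t y = besselMix (-σ) t y := by
  have hcone : ∀ᶠ p in 𝓝 (t, y),
      besselMix σ p.1 p.2 = powerSum (besselMixCoeff σ) (p.1 ^ 2 - p.2 ^ 2) := by
    filter_upwards [eventually_sq_lt_sq h] with p hp
    exact besselMix_eq_powerSum σ (sub_nonneg.2 hp.le)
  rw [waveOp_congr (g := fun t y => powerSum (besselMixCoeff σ) (t ^ 2 - y ^ 2)) hcone,
    (isFactorialBounded_besselMixCoeff σ).waveOp_powerSum, radialWaveCoeff_besselMixCoeff,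
    besselMix, besselMix_eq_powerSum _ (sub_nonneg.2 h.le)]

theorem waveOp_waveOp_besselMix (σ : ℝ) {t y : ℝ} (h : y ^ 2 < t ^ 2) :
    waveOp (waveOp (besselMix σ)) t y = besselMix σ t y := by
  have hwave : ∀ᶠ p in 𝓝 (t, y), waveOp (besselMix σ) p.1 p.2 = besselMix (-σ) p.1 p.2 := by
    filter_upwards [eventually_sq_lt_sq h] with p hp
    exact waveOp_besselMix σ hp
  rw [waveOp_congr hwave, waveOp_besselMix _ h, neg_neg]

/-- `v = (I₀ − J₀)(√(t²−y²))/2` satisfies `∂²v/∂t² − ∂²v/∂y² = u` with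
`u = (I₀ + J₀)(√(t²−y²))/2`, and consequently both `u` and `v` satisfy the
fourth-order equation `(∂²/∂t² − ∂²/∂y²)² w = w` on `{|y| < t}`. -/
theorem telegraph_v_and_fourth_order
    (u v : ℝ → ℝ → ℝ)
    (hu : ∀ t y : ℝ, u t y =
      (besselI0 (Real.sqrt (t ^ 2 - y ^ 2)) + besselJ0 (Real.sqrt (t ^ 2 - y ^ 2))) / 2)
    (hv : ∀ t y : ℝ, v t y =
      (besselI0 (Real.sqrt (t ^ 2 - y ^ 2)) - besselJ0 (Real.sqrt (t ^ 2 - y ^ 2))) / 2)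
    (t y : ℝ) (h : |y| < t) :
    waveOp v t y = u t y ∧
      waveOp (waveOp u) t y = u t y ∧
      waveOp (waveOp v) t y = v t y := by
  have hcone : y ^ 2 < t ^ 2 := sq_lt_sq' (neg_lt_of_abs_lt h) (lt_of_abs_lt h)
  obtain rfl : u = besselMix 1 := by
    funext t y
    rw [hu, besselMix, one_mul]
  obtain rfl : v = besselMix (-1) := by
    funext t y
    rw [hv, besselMix, neg_one_mul, sub_eq_add_neg]
  refine ⟨?_, waveOp_waveOp_besselMix 1 hcone, waveOp_waveOp_besselMix (-1) hcone⟩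
  rw [waveOp_besselMix _ hcone, neg_neg]
end

section
/- For each t > 0, ∫_{−t}^{t} (t/√(t²−y²)) ( I_1(√(t²−y²)) + J_1(√(t²−y²)) ) dy = 2 cosh t − 2 cos t. -/
open Real


section Aux
open Finset intervalIntegral


lemma prod_aux (k : ℕ) : (∏ i ∈ Finset.range k, (2*(i:ℝ)+2)/(2*i+3)) =
    4^k * (Nat.factorial k : ℝ)^2 / (Nat.factorial (2*k+1) : ℝ) := by
  induction k with
  | zero => norm_num
  | succ k ih =>
    rw [Finset.prod_range_succ, ih]
    have h1 : ((Nat.factorial (2*(k+1)+1) : ℝ)) = (2*(k:ℝ)+3) * ((2*k+2) * (Nat.factorial (2*k+1) : ℝ)) := by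
      have e : 2*(k+1)+1 = (2*k+1) + 1 + 1 := by ring
      rw [e, Nat.factorial_succ, Nat.factorial_succ]
      push_cast; ring
    have h4 : ((Nat.factorial (k+1) : ℝ)) = ((k:ℝ)+1) * (Nat.factorial k : ℝ) := by
      rw [Nat.factorial_succ]; push_cast; ring
    rw [h1, h4]
    have h2 : (Nat.factorial (2*k+1) : ℝ) ≠ 0 := Nat.cast_ne_zero.2 (Nat.factorial_ne_zero _)
    have h3 : (Nat.factorial k : ℝ) ≠ 0 := Nat.cast_ne_zero.2 (Nat.factorial_ne_zero _)
    have h5 : (2*(k:ℝ)+3) ≠ 0 := by positivity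
    field_simp
    ring


lemma integral_cos_odd (k : ℕ) : (∫ x in (-(π/2))..(π/2), cos x ^ (2*k+1)) =
    2 * ∏ i ∈ Finset.range k, (2*(i:ℝ)+2)/(2*i+3) := by
  have h := intervalIntegral.integral_comp_add_right (a := -(π/2)) (b := π/2)
    (fun x => sin x ^ (2*k+1)) (π/2)
  simp only [Real.sin_add_pi_div_two] at h
  rw [h]
  norm_num [integral_sin_pow_odd]

lemma integral_pow_aux (t : ℝ) (k : ℕ) :
    (∫ y in (-t)..t, (t^2 - y^2)^k) =
      t^(2*k+1) * (2 * ∏ i ∈ Finset.range k, (2*(i:ℝ)+2)/(2*i+3)) := by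
  have hsub := intervalIntegral.integral_comp_smul_deriv
    (a := -(π/2)) (b := π/2) (f := fun θ => t * sin θ) (f' := fun θ => t * cos θ)
    (g := fun y => (t^2 - y^2)^k)
    (fun x _ => (Real.hasDerivAt_sin x).const_mul t)
    (by fun_prop) (by fun_prop)
  simp only [Real.sin_pi_div_two, Real.sin_neg, mul_one, mul_neg, smul_eq_mul, Function.comp] at hsub
  rw [← hsub]
  have key : ∀ x : ℝ, t * cos x * (t^2 - (t * sin x)^2)^k = t^(2*k+1) * cos x ^ (2*k+1) := by
    intro x
    have h1 : t^2 - (t * sin x)^2 = (t * cos x)^2 := by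
      have := Real.sin_sq_add_cos_sq x
      nlinarith [this]
    rw [h1, ← pow_mul, ← pow_succ', mul_pow]
  simp_rw [key]
  rw [intervalIntegral.integral_const_mul, integral_cos_odd]


lemma bessel_summable (c : ℕ → ℝ) (hc : ∀ k, |c k| ≤ 1) (r : ℝ) :
    Summable (fun k : ℕ => c k * (r/2)^(2*k+1) / ((Nat.factorial k : ℝ) * (Nat.factorial (k+1)))) := by
  have base : Summable (fun k : ℕ => |r/2| * ((r/2)^2)^k / (Nat.factorial k : ℝ)) := by
    simpa [mul_div_assoc] using ((Real.summable_pow_div_factorial ((r/2)^2)).mul_left |r/2|)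
  refine Summable.of_abs (Summable.of_nonneg_of_le (fun k => abs_nonneg _) (fun k => ?_) base)
  have hfac1 : (0:ℝ) < (Nat.factorial k : ℝ) := by exact_mod_cast Nat.factorial_pos k
  have hfac2 : (1:ℝ) ≤ (Nat.factorial (k+1) : ℝ) := by exact_mod_cast Nat.one_le_iff_ne_zero.mpr (Nat.factorial_ne_zero _)
  have hY : |r/2| * ((r/2)^2)^k = |r/2|^(2*k+1) := by
    rw [← sq_abs, ← pow_mul, pow_succ']
  rw [abs_div, abs_mul, abs_pow, abs_mul, Nat.abs_cast, Nat.abs_cast, ← hY]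
  rw [div_le_div_iff₀ (by positivity) hfac1]
  have hYnn : (0:ℝ) ≤ |r/2| * ((r/2)^2)^k := by positivity
  have h1 : |c k| * (|r/2| * ((r/2)^2)^k) ≤ |r/2| * ((r/2)^2)^k := by
    nlinarith [hYnn, hc k, abs_nonneg (c k)]
  calc |c k| * (|r/2| * ((r/2)^2)^k) * (Nat.factorial k : ℝ)
      ≤ (|r/2| * ((r/2)^2)^k) * (Nat.factorial k : ℝ) := mul_le_mul_of_nonneg_right h1 hfac1.le
    _ ≤ |r/2| * ((r/2)^2)^k * ((Nat.factorial k : ℝ) * (Nat.factorial (k+1) : ℝ)) := by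
        nlinarith [mul_nonneg hYnn hfac1.le, hfac2]

lemma pointwise_aux (t y : ℝ) (ht : 0 < t) (hy : y^2 < t^2) :
    t / Real.sqrt (t^2 - y^2) * (besselI1 (Real.sqrt (t^2-y^2)) + besselJ1 (Real.sqrt (t^2-y^2)))
      = ∑' k : ℕ, t * ((1 + (-1:ℝ)^k) / (2^(2*k+1) * (Nat.factorial k : ℝ) * (Nat.factorial (k+1)))) * (t^2 - y^2)^k := by
  set r := Real.sqrt (t^2-y^2) with hrdef
  have hrpos : 0 < r := Real.sqrt_pos.2 (by linarith)
  have hr2 : r^2 = t^2 - y^2 := Real.sq_sqrt (by linarith)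
  have hI : Summable (fun k : ℕ => (r/2)^(2*k+1) / ((Nat.factorial k : ℝ) * (Nat.factorial (k+1)))) := by
    simpa using bessel_summable (fun _ => 1) (fun k => by norm_num) r
  have hJ : Summable (fun k : ℕ => (-1:ℝ)^k * (r/2)^(2*k+1) / ((Nat.factorial k : ℝ) * (Nat.factorial (k+1)))) := by
    simpa [mul_div_assoc] using bessel_summable (fun k => (-1:ℝ)^k) (fun k => by simp) r
  rw [besselI1, besselJ1, ← Summable.tsum_add hI hJ, ← tsum_mul_left]
  refine tsum_congr fun k => ?_
  rw [← hr2]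
  have hfk : (Nat.factorial k : ℝ) ≠ 0 := Nat.cast_ne_zero.2 (Nat.factorial_ne_zero _)
  have hfk1 : (Nat.factorial (k+1) : ℝ) ≠ 0 := Nat.cast_ne_zero.2 (Nat.factorial_ne_zero _)
  have hrpow : r^(2*k+1) = (r^2)^k * r := by rw [pow_succ, pow_mul]
  rw [div_pow, hrpow]
  field_simp

end Aux

/-- `∫₋ₜᵗ (t/√(t²−y²))(I₁ + J₁)(√(t²−y²)) dy = 2 cosh t − 2 cos t`. -/
theorem integral_I1_add_J1 (t : ℝ) (ht : 0 < t) :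
    (∫ y in (-t)..t, t / Real.sqrt (t ^ 2 - y ^ 2) *
        (besselI1 (Real.sqrt (t ^ 2 - y ^ 2)) + besselJ1 (Real.sqrt (t ^ 2 - y ^ 2)))) =
      2 * Real.cosh t - 2 * Real.cos t := by
  have hle : -t ≤ t := by linarith
  set c : ℕ → ℝ := fun k => (1 + (-1:ℝ)^k) / (2^(2*k+1) * (Nat.factorial k : ℝ) * (Nat.factorial (k+1))) with hc
  set F : ℕ → ℝ → ℝ := fun k y => t * c k * (t^2 - y^2)^k with hF
  set val : ℕ → ℝ := fun k => 2*(1 + (-1:ℝ)^k) * t^(2*k+2) / (Nat.factorial (2*k+2) : ℝ) with hvaldef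
  have hc0 : ∀ k, 0 ≤ c k := by
    intro k
    apply div_nonneg
    · rcases Nat.even_or_odd k with h | h
      · rw [h.neg_one_pow]; norm_num
      · rw [h.neg_one_pow]; norm_num
    · positivity
  -- value of each integral
  have hval : ∀ k, (∫ y in Set.Ioc (-t) t, F k y) = val k := by
    intro k
    rw [← intervalIntegral.integral_of_le hle]
    simp only [hF]
    rw [intervalIntegral.integral_const_mul, integral_pow_aux, prod_aux]
    have h4 : (4:ℝ)^k = 2^(2*k) := by rw [pow_mul]; norm_num
    have hfac : ((Nat.factorial (2*k+2) : ℝ)) = (2*(k:ℝ)+2) * (Nat.factorial (2*k+1) : ℝ) := by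
      have e : 2*k+2 = (2*k+1)+1 := by ring
      rw [e, Nat.factorial_succ]; push_cast; ring
    have hfk1 : ((Nat.factorial (k+1) : ℝ)) = ((k:ℝ)+1) * (Nat.factorial k : ℝ) := by
      rw [Nat.factorial_succ]; push_cast; ring
    simp only [hc, hvaldef]
    rw [h4, hfac, hfk1]
    have n1 : (Nat.factorial k : ℝ) ≠ 0 := Nat.cast_ne_zero.2 (Nat.factorial_ne_zero _)
    have n2 : (Nat.factorial (2*k+1) : ℝ) ≠ 0 := Nat.cast_ne_zero.2 (Nat.factorial_ne_zero _)
    have n3 : ((k:ℝ)+1) ≠ 0 := by positivity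
    have n4 : (2*(k:ℝ)+2) ≠ 0 := by positivity
    have n5 : (2:ℝ)^(2*k) ≠ 0 := by positivity
    field_simp
    ring
  -- HasSum of val
  have hcs : HasSum (fun n : ℕ => 2*(1 - (-1:ℝ)^n) * t^(2*n) / (Nat.factorial (2*n) : ℝ))
      (2 * Real.cosh t - 2 * Real.cos t) := by
    have h := ((Real.hasSum_cosh t).sub (Real.hasSum_cos t)).mul_left 2
    have e1 : 2*(Real.cosh t - Real.cos t) = 2*Real.cosh t - 2*Real.cos t := by ring
    rw [e1] at h
    have e2 : (fun n : ℕ => 2*(1 - (-1:ℝ)^n) * t^(2*n) / (Nat.factorial (2*n) : ℝ))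
        = (fun n : ℕ => 2 * (t^(2*n) / (Nat.factorial (2*n) : ℝ) - (-1:ℝ)^n * t^(2*n) / (Nat.factorial (2*n) : ℝ))) := by
      funext n; ring
    rw [e2]; exact h
  have hshift : HasSum val (2 * Real.cosh t - 2 * Real.cos t) := by
    have h := (hasSum_nat_add_iff (f := fun n : ℕ => 2*(1 - (-1:ℝ)^n) * t^(2*n) / (Nat.factorial (2*n) : ℝ)) 1).mpr
      (by simpa using hcs)
    have e3 : (fun n : ℕ => 2*(1 - (-1:ℝ)^(n+1)) * t^(2*(n+1)) / (Nat.factorial (2*(n+1)) : ℝ)) = val := by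
      funext k
      have e : 2*(k+1) = 2*k+2 := by ring
      simp only [hvaldef, e, pow_succ]
      ring
    rw [← e3]; exact h
  -- integrability and norms
  have hFint : ∀ k, MeasureTheory.IntegrableOn (F k) (Set.Ioc (-t) t) := by
    intro k
    exact (Continuous.integrableOn_Ioc (by fun_prop))
  have hnorm : ∀ k, (∫ y in Set.Ioc (-t) t, ‖F k y‖) = val k := by
    intro k
    rw [← hval k]
    refine MeasureTheory.setIntegral_congr_fun measurableSet_Ioc fun y hy => ?_
    have hy2 : y^2 ≤ t^2 := by
      rcases hy with ⟨h1, h2⟩; nlinarith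
    exact norm_of_nonneg (by
      apply mul_nonneg (mul_nonneg ht.le (hc0 k))
      exact pow_nonneg (by linarith) k)
  have hsummable : Summable (fun k => ∫ y in Set.Ioc (-t) t, ‖F k y‖) := by
    rw [funext hnorm]; exact hshift.summable
  have key := MeasureTheory.hasSum_integral_of_summable_integral_norm hFint hsummable
  rw [funext hval] at key
  -- conclude
  have hae : ∀ᵐ y : ℝ, y ∈ Set.Ioc (-t) t →
      t / Real.sqrt (t ^ 2 - y ^ 2) *
        (besselI1 (Real.sqrt (t ^ 2 - y ^ 2)) + besselJ1 (Real.sqrt (t ^ 2 - y ^ 2)))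
      = ∑' k, F k y := by
    have hne : ∀ᵐ y : ℝ, y ≠ t := by
      rw [MeasureTheory.ae_iff]
      simp only [ne_eq, not_not]
      rw [show {a : ℝ | a = t} = {t} from rfl]
      exact Real.volume_singleton
    filter_upwards [hne] with y hy hmem
    rcases hmem with ⟨h1, h2⟩
    have hy2 : y^2 < t^2 := by
      rcases lt_of_le_of_ne h2 hy with h2'
      nlinarith
    exact pointwise_aux t y ht hy2
  rw [intervalIntegral.integral_of_le hle,
    MeasureTheory.setIntegral_congr_ae measurableSet_Ioc hae]
  exact key.unique hshift
end

section
/- For t > 0 and the function g_c(t,y) = I_0(√(t²−y²))/2 + ((t+y)/(2√(t²−y²))) I_1(√(t²−y²)) on |y| < t: lim_{y↑t} g_c(t,y) = (1+t)/2 and lim_{y↓−t} g_c(t,y) = 1/2, and moreover ∫_{−t}^{t} g_c(t,y) dy + 1 = e^{t}. -/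
/-!
With `s = t ^ 2 - y ^ 2`, both `I₀(√s)` and `I₁(√s) / √s` are entire power series in `s`, so
`g_c(t, ·)` extends continuously to `|y| = t`, where `s = 0`; this gives the boundary limits.
For the mass, integrate term by term using
`∫_{-t}^{t} (t² - y²)^k dy = 2 · 4^k k!² t^(2k+1) / (2k+1)!`: the part `I₀ / 2` integrates to
`sinh t`, the part `t I₁(√s) / (2√s)` to `cosh t - 1`, and the odd part `y I₁(√s) / (2√s)` to `0`.
-/

open Real Filter

open Nat Set MeasureTheory Topology

section PowerSeries

variable {c : ℕ → ℝ}

lemma summable_mul_pow_of_abs_le_inv_factorial (hc : ∀ k, |c k| ≤ (k ! : ℝ)⁻¹) (x : ℝ) :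
    Summable fun k => c k * x ^ k := by
  refine .of_norm_bounded (Real.summable_pow_div_factorial |x|) fun k => ?_
  rw [norm_mul, norm_pow, Real.norm_eq_abs, Real.norm_eq_abs, div_eq_inv_mul]
  exact mul_le_mul_of_nonneg_right (hc k) (by positivity)

lemma continuous_tsum_mul_pow_of_abs_le_inv_factorial (hc : ∀ k, |c k| ≤ (k ! : ℝ)⁻¹) :
    Continuous fun x => ∑' k, c k * x ^ k := by
  refine continuous_iff_continuousAt.2 fun x => ?_
  have hx : Icc (-(|x| + 1)) (|x| + 1) ∈ 𝓝 x :=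
    Icc_mem_nhds (by linarith [neg_abs_le x]) (by linarith [le_abs_self x])
  refine (continuousOn_tsum (fun k => by fun_prop) (Real.summable_pow_div_factorial (|x| + 1))
    fun k y hy => ?_).continuousAt hx
  rw [norm_mul, norm_pow, Real.norm_eq_abs, Real.norm_eq_abs, div_eq_inv_mul]
  exact mul_le_mul (hc k) (pow_le_pow_left₀ (abs_nonneg y) (abs_le.2 hy) k) (by positivity)
    (by positivity)

lemma tsum_mul_zero_pow : ∑' k, c k * 0 ^ k = c 0 := by
  rw [tsum_eq_single 0 fun k hk => by simp [hk]]
  simp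

lemma hasSum_intervalIntegral_tsum_mul_pow (hc : ∀ k, |c k| ≤ (k ! : ℝ)⁻¹) {f : ℝ → ℝ}
    (hf : Continuous f) (a b : ℝ) :
    HasSum (fun k => c k * ∫ y in a..b, f y ^ k) (∫ y in a..b, ∑' k, c k * f y ^ k) := by
  obtain ⟨M, hM⟩ := (isCompact_uIcc (a := a) (b := b)).exists_bound_of_continuousOn hf.continuousOn
  simp_rw [← intervalIntegral.integral_const_mul]
  refine intervalIntegral.hasSum_integral_of_dominated_convergence (fun k _ => M ^ k / k !)
    (fun k => (by fun_prop : Continuous fun y => c k * f y ^ k).aestronglyMeasurable)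
    (fun k => .of_forall fun y hy => ?_) (.of_forall fun _ _ => Real.summable_pow_div_factorial M)
    intervalIntegrable_const
    (.of_forall fun y _ => (summable_mul_pow_of_abs_le_inv_factorial hc (f y)).hasSum)
  rw [norm_mul, norm_pow, Real.norm_eq_abs, div_eq_inv_mul]
  exact mul_le_mul (hc k) (pow_le_pow_left₀ (norm_nonneg _) (hM y (uIoc_subset_uIcc hy)) k)
    (by positivity) (by positivity)

end PowerSeries

lemma intervalIntegral.integral_eq_zero_of_odd {f : ℝ → ℝ} (hf : ∀ x, f (-x) = -f x) (a : ℝ) :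
    ∫ x in -a..a, f x = 0 := by
  have h := intervalIntegral.integral_comp_neg (a := -a) (b := a) f
  simp only [hf, intervalIntegral.integral_neg, neg_neg] at h
  linarith

lemma intervalIntegral_pow_succ_sq_sub_sq (t : ℝ) (k : ℕ) :
    (2 * k + 3) * ∫ y in -t..t, (t ^ 2 - y ^ 2) ^ (k + 1) =
      2 * (k + 1) * t ^ 2 * ∫ y in -t..t, (t ^ 2 - y ^ 2) ^ k := by
  -- integrate by parts: differentiate `y * (t ^ 2 - y ^ 2) ^ (k + 1)`, which vanishes at `±t`
  have hderiv : ∀ y ∈ uIcc (-t) t, HasDerivAt (fun y => y * (t ^ 2 - y ^ 2) ^ (k + 1))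
      ((2 * k + 3) * (t ^ 2 - y ^ 2) ^ (k + 1) - 2 * (k + 1) * t ^ 2 * (t ^ 2 - y ^ 2) ^ k) y := by
    intro y _
    refine ((hasDerivAt_id' y).fun_mul
      (((hasDerivAt_pow 2 y).const_sub (t ^ 2)).fun_pow (k + 1))).congr_deriv ?_
    simp only [Nat.add_sub_cancel]
    push_cast
    ring
  have hint := intervalIntegral.integral_eq_sub_of_hasDerivAt hderiv
    (Continuous.intervalIntegrable (by fun_prop) _ _)
  rw [intervalIntegral.integral_sub (Continuous.intervalIntegrable (by fun_prop) _ _)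
    (Continuous.intervalIntegrable (by fun_prop) _ _),
    intervalIntegral.integral_const_mul, intervalIntegral.integral_const_mul] at hint
  simp only [neg_sq, sub_self, ne_eq, add_eq_zero, one_ne_zero, and_false, not_false_eq_true,
    zero_pow, mul_zero] at hint
  linarith

lemma intervalIntegral_pow_sq_sub_sq (t : ℝ) (k : ℕ) :
    ∫ y in -t..t, (t ^ 2 - y ^ 2) ^ k =
      2 * 4 ^ k * (k ! : ℝ) ^ 2 * t ^ (2 * k + 1) / (2 * k + 1)! := by
  induction k with
  | zero => simp [two_mul]
  | succ k ih =>
    have hrec := intervalIntegral_pow_succ_sq_sub_sq t k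
    rw [ih] at hrec
    rw [show 2 * (k + 1) + 1 = 2 * k + 1 + 1 + 1 by ring, factorial_succ (2 * k + 1 + 1),
      factorial_succ (2 * k + 1), factorial_succ k]
    push_cast at hrec ⊢
    field_simp at hrec ⊢
    linear_combination (2 * (k : ℝ) + 2) * hrec

noncomputable def besselI0Coeff (k : ℕ) : ℝ := (4 ^ k * (k ! : ℝ) ^ 2)⁻¹

noncomputable def besselI1Coeff (k : ℕ) : ℝ := (4 ^ k * ((k ! : ℝ) * (k + 1)!))⁻¹

noncomputable def besselI0Sq (s : ℝ) : ℝ := ∑' k, besselI0Coeff k * s ^ k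

noncomputable def besselI1Sq (s : ℝ) : ℝ := ∑' k, besselI1Coeff k * s ^ k

lemma abs_besselI0Coeff_le (k : ℕ) : |besselI0Coeff k| ≤ (k ! : ℝ)⁻¹ := by
  have hk : (1 : ℝ) ≤ k ! := mod_cast k.factorial_pos
  rw [besselI0Coeff, abs_of_pos (by positivity)]
  gcongr
  nlinarith [one_le_pow₀ (by norm_num : (1 : ℝ) ≤ 4) (n := k)]

lemma abs_besselI1Coeff_le (k : ℕ) : |besselI1Coeff k| ≤ (k ! : ℝ)⁻¹ := by
  have hk : (1 : ℝ) ≤ k ! := mod_cast k.factorial_pos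
  have hk1 : (1 : ℝ) ≤ (k + 1)! := mod_cast (k + 1).factorial_pos
  have h4 : (1 : ℝ) ≤ 4 ^ k := one_le_pow₀ (by norm_num)
  rw [besselI1Coeff, abs_of_pos (by positivity)]
  gcongr
  nlinarith [mul_le_mul h4 hk1 zero_le_one (by positivity)]

lemma besselI0_eq_besselI0Sq (r : ℝ) : besselI0 r = besselI0Sq (r ^ 2) := by
  refine tsum_congr fun k => ?_
  rw [besselI0Coeff, pow_mul, div_pow r, div_pow, show (2 : ℝ) ^ 2 = 4 by norm_num]
  field_simp

lemma besselI1_eq_besselI1Sq (r : ℝ) : besselI1 r = r / 2 * besselI1Sq (r ^ 2) := by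
  rw [besselI1Sq, ← tsum_mul_left]
  refine tsum_congr fun k => ?_
  rw [besselI1Coeff, pow_succ, pow_mul, div_pow r 2 2, div_pow, show (2 : ℝ) ^ 2 = 4 by norm_num]
  field_simp

@[fun_prop]
lemma continuous_besselI0Sq : Continuous besselI0Sq :=
  continuous_tsum_mul_pow_of_abs_le_inv_factorial abs_besselI0Coeff_le

@[fun_prop]
lemma continuous_besselI1Sq : Continuous besselI1Sq :=
  continuous_tsum_mul_pow_of_abs_le_inv_factorial abs_besselI1Coeff_le

@[simp]
lemma besselI0Sq_zero : besselI0Sq 0 = 1 := by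
  simp [besselI0Sq, tsum_mul_zero_pow, besselI0Coeff]

@[simp]
lemma besselI1Sq_zero : besselI1Sq 0 = 1 := by
  simp [besselI1Sq, tsum_mul_zero_pow, besselI1Coeff]

lemma intervalIntegral_besselI0Sq (t : ℝ) :
    ∫ y in -t..t, besselI0Sq (t ^ 2 - y ^ 2) = 2 * sinh t := by
  have hterm (k : ℕ) : besselI0Coeff k * ∫ y in -t..t, (t ^ 2 - y ^ 2) ^ k =
      2 * (t ^ (2 * k + 1) / (2 * k + 1)!) := by
    rw [intervalIntegral_pow_sq_sub_sq, besselI0Coeff]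
    field_simp
  have := hasSum_intervalIntegral_tsum_mul_pow abs_besselI0Coeff_le
    (by fun_prop : Continuous fun y => t ^ 2 - y ^ 2) (-t) t
  simp_rw [hterm] at this
  exact this.unique ((Real.hasSum_sinh t).mul_left 2)

lemma mul_intervalIntegral_besselI1Sq (t : ℝ) :
    t * ∫ y in -t..t, besselI1Sq (t ^ 2 - y ^ 2) = 4 * (cosh t - 1) := by
  have hterm (k : ℕ) : t * (besselI1Coeff k * ∫ y in -t..t, (t ^ 2 - y ^ 2) ^ k) =
      4 * (t ^ (2 * (k + 1)) / (2 * (k + 1))!) := by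
    rw [intervalIntegral_pow_sq_sub_sq, besselI1Coeff, mul_add, mul_one,
      factorial_succ (2 * k + 1), factorial_succ k]
    push_cast
    field_simp
    ring
  have := (hasSum_intervalIntegral_tsum_mul_pow abs_besselI1Coeff_le
    (by fun_prop : Continuous fun y => t ^ 2 - y ^ 2) (-t) t).mul_left t
  simp_rw [hterm] at this
  refine this.unique ((hasSum_nat_add_iff' 1).2 (Real.hasSum_cosh t) |>.mul_left 4) |>.trans ?_
  simp

lemma intervalIntegral_mul_besselI1Sq (t : ℝ) :
    ∫ y in -t..t, y * besselI1Sq (t ^ 2 - y ^ 2) = 0 :=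
  intervalIntegral.integral_eq_zero_of_odd (fun y => by rw [neg_sq, neg_mul]) t

noncomputable def gc (t y : ℝ) : ℝ :=
  besselI0 (√(t ^ 2 - y ^ 2)) / 2 + (t + y) / (2 * √(t ^ 2 - y ^ 2)) * besselI1 (√(t ^ 2 - y ^ 2))

-- `gc` with the removable singularity of `I₁(r) / r` at `r = 0` cancelled
noncomputable def gcExtension (t y : ℝ) : ℝ :=
  besselI0Sq (t ^ 2 - y ^ 2) / 2 + (t + y) / 4 * besselI1Sq (t ^ 2 - y ^ 2)

lemma gc_eq_gcExtension {t y : ℝ} (h : y ^ 2 < t ^ 2) : gc t y = gcExtension t y := by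
  have hs : 0 < t ^ 2 - y ^ 2 := by linarith
  have hr : 0 < √(t ^ 2 - y ^ 2) := Real.sqrt_pos.2 hs
  rw [gc, gcExtension, besselI0_eq_besselI0Sq, besselI1_eq_besselI1Sq, Real.sq_sqrt hs.le]
  field_simp
  ring

lemma gcExtension_self (t : ℝ) : gcExtension t t = (1 + t) / 2 := by
  simp only [gcExtension, sub_self, besselI0Sq_zero, besselI1Sq_zero]
  ring

lemma gcExtension_neg_self (t : ℝ) : gcExtension t (-t) = 1 / 2 := by
  simp [gcExtension]

@[fun_prop]
lemma continuous_gcExtension (t : ℝ) : Continuous (gcExtension t) := by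
  unfold gcExtension
  fun_prop

lemma tendsto_gc_nhdsLT {t : ℝ} (ht : 0 < t) : Tendsto (gc t) (𝓝[<] t) (𝓝 ((1 + t) / 2)) := by
  have hlim : Tendsto (gcExtension t) (𝓝[<] t) (𝓝 (gcExtension t t)) :=
    (continuous_gcExtension t).continuousWithinAt
  rw [gcExtension_self] at hlim
  exact hlim.congr' <| eventuallyEq_of_mem (Ioo_mem_nhdsLT (by linarith : -t < t))
    fun y hy => (gc_eq_gcExtension (sq_lt_sq' hy.1 hy.2)).symm

lemma tendsto_gc_nhdsGT {t : ℝ} (ht : 0 < t) : Tendsto (gc t) (𝓝[>] (-t)) (𝓝 (1 / 2)) := by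
  have hlim : Tendsto (gcExtension t) (𝓝[>] (-t)) (𝓝 (gcExtension t (-t))) :=
    (continuous_gcExtension t).continuousWithinAt
  rw [gcExtension_neg_self] at hlim
  exact hlim.congr' <| eventuallyEq_of_mem (Ioo_mem_nhdsGT (by linarith : -t < t))
    fun y hy => (gc_eq_gcExtension (sq_lt_sq' hy.1 hy.2)).symm

lemma intervalIntegral_gcExtension (t : ℝ) : ∫ y in -t..t, gcExtension t y = exp t - 1 := by
  have hsplit : gcExtension t = fun y => 2⁻¹ * besselI0Sq (t ^ 2 - y ^ 2) +
      t / 4 * besselI1Sq (t ^ 2 - y ^ 2) + 4⁻¹ * (y * besselI1Sq (t ^ 2 - y ^ 2)) := by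
    funext y
    rw [gcExtension]
    ring
  rw [hsplit, intervalIntegral.integral_add (Continuous.intervalIntegrable (by fun_prop) _ _)
      (Continuous.intervalIntegrable (by fun_prop) _ _),
    intervalIntegral.integral_add (Continuous.intervalIntegrable (by fun_prop) _ _)
      (Continuous.intervalIntegrable (by fun_prop) _ _),
    intervalIntegral.integral_const_mul, intervalIntegral.integral_const_mul,
    intervalIntegral.integral_const_mul, intervalIntegral_besselI0Sq,
    intervalIntegral_mul_besselI1Sq]
  linear_combination mul_intervalIntegral_besselI1Sq t / 4 + sinh_add_cosh t

lemma intervalIntegral_gc (t : ℝ) : ∫ y in -t..t, gc t y = exp t - 1 := by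
  rw [← intervalIntegral_gcExtension t]
  refine intervalIntegral.integral_congr_ae (((volume.ae_ne t).and (volume.ae_ne (-t))).mono
    fun y ⟨hyt, hyt'⟩ hy => ?_)
  refine gc_eq_gcExtension ?_
  rcases mem_uIoc.1 hy with ⟨h₁, h₂⟩ | ⟨h₁, h₂⟩
  · nlinarith [lt_of_le_of_ne h₂ hyt]
  · nlinarith [lt_of_le_of_ne h₂ hyt']

/-- Boundary limits and normalization of the continuous part of the telegraph
density for `m = 1`. -/
theorem telegraph_gc_boundary_and_mass
    (g : ℝ → ℝ → ℝ)
    (hg : ∀ t y : ℝ, g t y =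
      besselI0 (Real.sqrt (t ^ 2 - y ^ 2)) / 2 +
        (t + y) / (2 * Real.sqrt (t ^ 2 - y ^ 2)) * besselI1 (Real.sqrt (t ^ 2 - y ^ 2)))
    (t : ℝ) (ht : 0 < t) :
    Filter.Tendsto (fun y : ℝ => g t y) (nhdsWithin t (Set.Iio t)) (nhds ((1 + t) / 2)) ∧
    Filter.Tendsto (fun y : ℝ => g t y) (nhdsWithin (-t) (Set.Ioi (-t))) (nhds (1 / 2)) ∧
    (∫ y in (-t)..t, g t y) + 1 = Real.exp t := by
  obtain rfl : g = gc := funext fun t => funext (hg t)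
  refine ⟨tendsto_gc_nhdsLT ht, tendsto_gc_nhdsGT ht, ?_⟩
  rw [intervalIntegral_gc]
  ring
end

section
/- For t > 0, ∫_{−t}^{t} (t/√(t²−y²)) ( I_1(√(t²−y²)) − J_1(√(t²−y²)) ) dy = 2 cosh t + 2 cos t − 4. -/
open Real


/-! Both series are odd in `r`, so with `r = √(t² - y²)` the integrand `(t / r) (I₁ - J₁)(r)` is
a power series in `t² - y²` whose coefficients are bounded by those of `exp (t² / 4)`; it can be
integrated termwise. Integrating by parts gives
`∫₋ₜᵗ (t² - y²)ᵏ dy = 2²ᵏ⁺¹ k!² t²ᵏ⁺¹ / (2k+1)!`, which turns the `k`-th term of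
`(t / r) Σ εₖ (r/2)²ᵏ⁺¹ / (k! (k+1)!)` into `2 εₖ t²ᵏ⁺² / (2k+2)!`. For `εₖ = 1 - (-1)ᵏ` these are
twice the Taylor coefficients of `cosh t + cos t - 2`. -/

open MeasureTheory Set
open scoped Nat Interval

/-- `besselI1` and `besselJ1` are the cases `ε = 1` and `ε k = (-1) ^ k`. -/
noncomputable def weightedBesselI1 (ε : ℕ → ℝ) (r : ℝ) : ℝ :=
  ∑' k : ℕ, ε k * (r / 2) ^ (2 * k + 1) / ((k ! : ℝ) * (k + 1)!)

theorem summable_weightedBesselI1 {ε : ℕ → ℝ} {C : ℝ} (hε : ∀ k, |ε k| ≤ C) (r : ℝ) :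
    Summable fun k : ℕ => ε k * (r / 2) ^ (2 * k + 1) / ((k ! : ℝ) * (k + 1)!) := by
  refine .of_norm_bounded ((Real.summable_pow_div_factorial (r ^ 2 / 4)).mul_left (C * (|r| / 2)))
    fun k => ?_
  have hpow : (|r| / 2) ^ (2 * k + 1) = (r ^ 2 / 4) ^ k * (|r| / 2) := by
    rw [pow_succ, pow_mul, div_pow, sq_abs]
    norm_num
  calc ‖ε k * (r / 2) ^ (2 * k + 1) / ((k ! : ℝ) * (k + 1)!)‖
      = |ε k| * (|r| / 2) ^ (2 * k + 1) / ((k ! : ℝ) * (k + 1)!) := by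
        simp
    _ ≤ C * (|r| / 2) ^ (2 * k + 1) / ((k ! : ℝ) * 1) := by
        have hC : 0 ≤ C * (|r| / 2) ^ (2 * k + 1) :=
          mul_nonneg ((abs_nonneg _).trans (hε 0)) (by positivity)
        gcongr
        · exact hε k
        · exact Nat.one_le_cast.mpr (k + 1).factorial_pos
    _ = C * (|r| / 2) * ((r ^ 2 / 4) ^ k / k !) := by
        rw [hpow]; ring

theorem besselI1_sub_besselJ1 (r : ℝ) :
    besselI1 r - besselJ1 r = weightedBesselI1 (fun k => 1 - (-1) ^ k) r := by
  have hI := summable_weightedBesselI1 (ε := fun _ => 1) (C := 1) (fun _ => by simp) r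
  have hJ := summable_weightedBesselI1 (ε := fun k => (-1) ^ k) (C := 1) (fun _ => by simp) r
  simp only [one_mul] at hI
  rw [besselI1, besselJ1, ← hI.tsum_sub hJ, weightedBesselI1]
  congr 1 with k
  ring

theorem hasSum_div_sqrt_mul_weightedBesselI1 {ε : ℕ → ℝ} {C : ℝ} (hε : ∀ k, |ε k| ≤ C)
    (t : ℝ) {s : ℝ} (hs : 0 < s) :
    HasSum (fun k => t * ε k / (2 ^ (2 * k + 1) * ((k ! : ℝ) * (k + 1)!)) * s ^ k)
      (t / √s * weightedBesselI1 ε √s) := by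
  have hterm : ∀ k : ℕ, t / √s * (ε k * (√s / 2) ^ (2 * k + 1) / ((k ! : ℝ) * (k + 1)!)) =
      t * ε k / (2 ^ (2 * k + 1) * ((k ! : ℝ) * (k + 1)!)) * s ^ k := fun k => by
    rw [div_pow, pow_succ, pow_mul, Real.sq_sqrt hs.le]
    field_simp [(Real.sqrt_pos.mpr hs).ne']
  unfold weightedBesselI1
  simpa only [hterm] using (summable_weightedBesselI1 hε √s).hasSum.mul_left (t / √s)

theorem integral_sq_sub_sq_pow_succ (t : ℝ) (k : ℕ) :
    (2 * k + 3) * ∫ y in (-t)..t, (t ^ 2 - y ^ 2) ^ (k + 1) =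
      (2 * k + 2) * t ^ 2 * ∫ y in (-t)..t, (t ^ 2 - y ^ 2) ^ k := by
  have hderiv : ∀ y, HasDerivAt (fun y => y * (t ^ 2 - y ^ 2) ^ (k + 1))
      ((2 * k + 3) * (t ^ 2 - y ^ 2) ^ (k + 1) - (2 * k + 2) * t ^ 2 * (t ^ 2 - y ^ 2) ^ k) y := by
    intro y
    refine ((hasDerivAt_id' y).mul
      (((hasDerivAt_pow 2 y).const_sub (t ^ 2)).pow (k + 1))).congr_deriv ?_
    simp only [Nat.add_sub_cancel, Pi.pow_apply]
    push_cast
    ring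
  have hFTC := intervalIntegral.integral_eq_sub_of_hasDerivAt (a := -t) (b := t)
    (fun y _ => hderiv y) (Continuous.intervalIntegrable (by fun_prop) _ _)
  rwa [intervalIntegral.integral_sub (Continuous.intervalIntegrable (by fun_prop) _ _)
    (Continuous.intervalIntegrable (by fun_prop) _ _), intervalIntegral.integral_const_mul,
    intervalIntegral.integral_const_mul, neg_sq, sub_self, zero_pow k.succ_ne_zero, mul_zero,
    mul_zero, sub_zero, sub_eq_zero] at hFTC

theorem integral_sq_sub_sq_pow (t : ℝ) (k : ℕ) :
    ∫ y in (-t)..t, (t ^ 2 - y ^ 2) ^ k =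
      2 ^ (2 * k + 1) * (k ! : ℝ) ^ 2 / (2 * k + 1)! * t ^ (2 * k + 1) := by
  induction k with
  | zero => simp; ring
  | succ k ih =>
    have hk : (2 * k + 3 : ℝ) ≠ 0 := by positivity
    apply mul_left_cancel₀ hk
    rw [integral_sq_sub_sq_pow_succ, ih, show 2 * (k + 1) + 1 = 2 * k + 1 + 1 + 1 by ring]
    push_cast [Nat.factorial_succ]
    field_simp
    ring

theorem norm_mul_pow_le_of_abs_le {c C t s : ℝ} (hc : |c| ≤ C) (hs₀ : 0 ≤ s) (hs : s ≤ t ^ 2)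
    (k : ℕ) :
    ‖t * c / (2 ^ (2 * k + 1) * ((k ! : ℝ) * (k + 1)!)) * s ^ k‖ ≤
      |t| * C * ((t ^ 2 / 4) ^ k / k !) := by
  have hC : 0 ≤ |t| * C := mul_nonneg (abs_nonneg t) ((abs_nonneg c).trans hc)
  have hden : (4 : ℝ) ^ k * k ! ≤ 2 ^ (2 * k + 1) * (k ! * (k + 1)!) := by
    have h₁ : (1 : ℝ) ≤ (k + 1)! := Nat.one_le_cast.mpr (k + 1).factorial_pos
    have h₂ : (0 : ℝ) < 4 ^ k * k ! := by positivity
    rw [pow_succ, pow_mul]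
    norm_num
    nlinarith
  calc ‖t * c / (2 ^ (2 * k + 1) * ((k ! : ℝ) * (k + 1)!)) * s ^ k‖
      = |t| * |c| * s ^ k / (2 ^ (2 * k + 1) * ((k ! : ℝ) * (k + 1)!)) := by
        simp only [norm_mul, norm_div, norm_eq_abs, norm_pow, RCLike.norm_natCast,
          abs_of_nonneg hs₀]
        ring
    _ ≤ |t| * C * (t ^ 2) ^ k / (4 ^ k * k !) := by gcongr
    _ = |t| * C * ((t ^ 2 / 4) ^ k / k !) := by
        rw [div_pow]
        ring

theorem integral_mul_sq_sub_sq_pow (c t : ℝ) (k : ℕ) :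
    ∫ y in (-t)..t, t * c / (2 ^ (2 * k + 1) * ((k ! : ℝ) * (k + 1)!)) * (t ^ 2 - y ^ 2) ^ k =
      2 * (c * t ^ (2 * k + 2) / (2 * k + 2)!) := by
  rw [intervalIntegral.integral_const_mul, integral_sq_sub_sq_pow,
    show 2 * k + 2 = 2 * k + 1 + 1 by ring]
  push_cast [Nat.factorial_succ]
  field_simp
  ring

theorem hasSum_integral_div_sqrt_mul_weightedBesselI1 {ε : ℕ → ℝ} {C : ℝ}
    (hε : ∀ k, |ε k| ≤ C) (t : ℝ) :
    HasSum (fun k => 2 * (ε k * t ^ (2 * k + 2) / (2 * k + 2)!))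
      (∫ y in (-t)..t, t / √(t ^ 2 - y ^ 2) * weightedBesselI1 ε √(t ^ 2 - y ^ 2)) := by
  simp only [← integral_mul_sq_sub_sq_pow]
  have hsq : ∀ y ∈ Ι (-t) t, y ^ 2 ≤ t ^ 2 := fun y hy => by
    rcases mem_uIcc.mp (uIoc_subset_uIcc hy) with ⟨h₁, h₂⟩ | ⟨h₁, h₂⟩
    · exact sq_le_sq' h₁ h₂
    · nlinarith
  refine intervalIntegral.hasSum_integral_of_dominated_convergence
    (fun k _ => |t| * C * ((t ^ 2 / 4) ^ k / k !))
    (fun k => (by fun_prop : Continuous _).aestronglyMeasurable)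
    (fun k => ae_of_all _ fun y hy => norm_mul_pow_le_of_abs_le (hε k)
      (sub_nonneg.mpr (hsq y hy)) (by linarith [sq_nonneg y]) k)
    (ae_of_all _ fun _ _ => (Real.summable_pow_div_factorial _).mul_left _)
    intervalIntegrable_const ?_
  -- At `y = ±t` the integrand is the junk value `t / 0 * _ = 0`, not the series' `t * ε 0 / 2`.
  filter_upwards [(Set.toFinite {t, -t}).countable.ae_notMem volume] with y hy hyI
  have hne : y ^ 2 ≠ t ^ 2 := by simpa [sq_eq_sq_iff_eq_or_eq_neg] using hy
  exact hasSum_div_sqrt_mul_weightedBesselI1 hε t (sub_pos.mpr ((hsq y hyI).lt_of_ne hne))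

theorem hasSum_cosh_add_cos (t : ℝ) :
    HasSum (fun k : ℕ => (1 - (-1) ^ k) * t ^ (2 * k + 2) / (2 * k + 2)!) (cosh t + cos t - 2) := by
  have h := ((hasSum_nat_add_iff' 1).mpr (Real.hasSum_cosh t)).add
    ((hasSum_nat_add_iff' 1).mpr (Real.hasSum_cos t))
  have hterm : ∀ k : ℕ, t ^ (2 * (k + 1)) / (2 * (k + 1))! +
      (-1) ^ (k + 1) * t ^ (2 * (k + 1)) / (2 * (k + 1))! =
      (1 - (-1) ^ k) * t ^ (2 * k + 2) / (2 * k + 2)! := fun k => by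
    rw [mul_add_one]; ring
  simp only [hterm, Finset.sum_range_one, mul_zero, pow_zero, Nat.factorial_zero, Nat.cast_one,
    div_one, one_mul] at h
  rwa [show cosh t + cos t - 2 = cosh t - 1 + (cos t - 1) by ring]

theorem integral_I1_sub_J1_general (t : ℝ) :
    (∫ y in (-t)..t, t / Real.sqrt (t ^ 2 - y ^ 2) *
        (besselI1 (Real.sqrt (t ^ 2 - y ^ 2)) - besselJ1 (Real.sqrt (t ^ 2 - y ^ 2)))) =
      2 * Real.cosh t + 2 * Real.cos t - 4 := by
  have hε : ∀ k : ℕ, |1 - (-1 : ℝ) ^ k| ≤ 2 := fun k => by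
    rcases neg_one_pow_eq_or ℝ k with h | h <;> norm_num [h]
  simp_rw [besselI1_sub_besselJ1]
  rw [(hasSum_integral_div_sqrt_mul_weightedBesselI1 hε t).unique
    ((hasSum_cosh_add_cos t).mul_left 2)]
  ring

/-- `∫₋ₜᵗ (t/√(t²−y²))(I₁ − J₁)(√(t²−y²)) dy = 2 cosh t + 2 cos t − 4`. -/
theorem integral_I1_sub_J1 (t : ℝ) (ht : 0 < t) :
    (∫ y in (-t)..t, t / Real.sqrt (t ^ 2 - y ^ 2) *
        (besselI1 (Real.sqrt (t ^ 2 - y ^ 2)) - besselJ1 (Real.sqrt (t ^ 2 - y ^ 2)))) =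
      2 * Real.cosh t + 2 * Real.cos t - 4 :=
  integral_I1_sub_J1_general t
end

section
/- For t > 0, with g_c(t,y) = −J_0(√(t²−y²))/2 + ((t+y)/(2√(t²−y²))) I_1(√(t²−y²)) − (y²/(2(t²−y²)^{3/2})) (I_1 + J_1)(√(t²−y²)) + (t²/(4(t²−y²))) (I_0 + I_2 + J_0 − J_2)(√(t²−y²)), one has ∫_{−t}^{t} g_c(t,y) dy = e^{t} − 1 − t. -/
open Real


/-!
Write `Iₙ(r) = (r/2)ⁿ Fₙ(r²/4)` and `Jₙ(r) = (r/2)ⁿ Fₙ(-r²/4)` with the entire series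
`Fₙ(x) = ∑ xᵏ / (k! (k+n)!)`. For `y² < t²` put `u = (t² - y²)/4`; the recurrence
`F₀(x) - x F₂(x) = F₁(x)` removes the singular factors `1/(t² - y²)`, and
`g_c = -F₀(-u)/2 + (t/4) F₁(u) + (y/4) F₁(u) + (F₁(u) + F₁(-u))/4 + (t²/8) (F₂(u) - F₂(-u))`.
Each term integrates term by term through the Beta integral
`∫₋ₜᵗ uᵏ dy = 2 k!² t^(2k+1) / (2k+1)!`, giving `-sin t`, `cosh t - 1`, `0` (odd integrand) and
`sinh t + sin t - t`, whose sum is `eᵗ - 1 - t`.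
-/

open scoped Nat
open intervalIntegral

/-- `Iₙ(r) = (r/2)ⁿ besselSeries n (r²/4)` and `Jₙ(r) = (r/2)ⁿ besselSeries n (-r²/4)`. -/
noncomputable def besselSeries (n : ℕ) (x : ℝ) : ℝ :=
  ∑' k : ℕ, x ^ k / ((k ! : ℝ) * (k + n)!)

lemma abs_pow_div_factorial_mul_factorial_le (n k : ℕ) (x : ℝ) :
    |x ^ k / ((k ! : ℝ) * (k + n)!)| ≤ |x| ^ k / k ! := by
  rw [abs_div, abs_pow, abs_of_pos (show (0 : ℝ) < k ! * (k + n)! by positivity)]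
  gcongr
  exact le_mul_of_one_le_right (by positivity) (by exact_mod_cast (k + n).factorial_pos)

lemma hasSum_besselSeries (n : ℕ) (x : ℝ) :
    HasSum (fun k : ℕ => x ^ k / ((k ! : ℝ) * (k + n)!)) (besselSeries n x) :=
  (Summable.of_norm_bounded (Real.summable_pow_div_factorial |x|)
    (abs_pow_div_factorial_mul_factorial_le n · x)).hasSum

@[fun_prop]
lemma continuous_besselSeries (n : ℕ) : Continuous (besselSeries n) := by
  refine continuous_iff_continuousAt.mpr fun x => ?_
  have hR : ContinuousOn (besselSeries n) (Set.Icc (-(|x| + 1)) (|x| + 1)) :=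
    continuousOn_tsum (fun k => by fun_prop) (Real.summable_pow_div_factorial (|x| + 1))
      fun k y hy => (abs_pow_div_factorial_mul_factorial_le n k y).trans <| by
        gcongr
        exact abs_le.mpr hy
  exact hR.continuousAt (Icc_mem_nhds (by linarith [neg_abs_le x]) (by linarith [le_abs_self x]))

/-- The recurrence `Iₙ(r) - Iₙ₊₂(r) = 2 (n+1) Iₙ₊₁(r) / r`. -/
lemma besselSeries_sub_mul_besselSeries_add_two (n : ℕ) (x : ℝ) :
    besselSeries n x - x * besselSeries (n + 2) x = (n + 1) * besselSeries (n + 1) x := by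
  have hn := (hasSum_nat_add_iff' 1).mpr (hasSum_besselSeries n x)
  have hn1 := ((hasSum_nat_add_iff' 1).mpr (hasSum_besselSeries (n + 1) x)).mul_left (n + 1 : ℝ)
  have key := (hn.sub ((hasSum_besselSeries (n + 2) x).mul_left x)).unique <| hn1.congr_fun
    fun k => by
      push_cast [Nat.factorial_succ, show k + 1 + n = k + n + 1 by ring,
        show k + (n + 2) = k + n + 1 + 1 by ring, show k + 1 + (n + 1) = k + n + 1 + 1 by ring]
      field_simp
      ring
  have h0 : (1 : ℝ) / n ! = (n + 1) / (n + 1)! := by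
    push_cast [Nat.factorial_succ]
    field_simp
  simp only [Finset.sum_range_one, pow_zero, Nat.factorial_zero, zero_add, Nat.cast_one,
    one_mul] at key
  linear_combination key + h0

lemma besselI0_eq (r : ℝ) : besselI0 r = besselSeries 0 ((r / 2) ^ 2) :=
  tsum_congr fun k => by rw [Nat.add_zero, ← pow_mul]; ring

lemma besselJ0_eq (r : ℝ) : besselJ0 r = besselSeries 0 (-(r / 2) ^ 2) :=
  tsum_congr fun k => by rw [Nat.add_zero, neg_pow ((r / 2) ^ 2), ← pow_mul]; ring

lemma besselI1_eq (r : ℝ) : besselI1 r = r / 2 * besselSeries 1 ((r / 2) ^ 2) := by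
  rw [besselSeries, ← tsum_mul_left]
  exact tsum_congr fun k => by rw [← pow_mul]; ring

lemma besselJ1_eq (r : ℝ) : besselJ1 r = r / 2 * besselSeries 1 (-(r / 2) ^ 2) := by
  rw [besselSeries, ← tsum_mul_left]
  exact tsum_congr fun k => by rw [neg_pow ((r / 2) ^ 2), ← pow_mul]; ring

lemma besselI2_eq (r : ℝ) : besselI2 r = (r / 2) ^ 2 * besselSeries 2 ((r / 2) ^ 2) := by
  rw [besselSeries, ← tsum_mul_left]
  exact tsum_congr fun k => by rw [← pow_mul]; ring

lemma besselJ2_eq (r : ℝ) : besselJ2 r = (r / 2) ^ 2 * besselSeries 2 (-(r / 2) ^ 2) := by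
  rw [besselSeries, ← tsum_mul_left]
  exact tsum_congr fun k => by rw [neg_pow ((r / 2) ^ 2), ← pow_mul]; ring

noncomputable def besselArg (t y : ℝ) : ℝ := (t ^ 2 - y ^ 2) / 4

@[fun_prop]
lemma continuous_besselArg (t : ℝ) : Continuous (besselArg t) := by
  unfold besselArg
  fun_prop

lemma besselArg_neg (t y : ℝ) : besselArg t (-y) = besselArg t y := by
  rw [besselArg, besselArg, neg_sq]

lemma hasDerivAt_besselArg (t y : ℝ) : HasDerivAt (besselArg t) (-y / 2) y :=
  (((hasDerivAt_pow 2 y).const_sub (t ^ 2)).div_const 4).congr_deriv (by norm_num; ring)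

lemma integral_besselArg_pow_succ (t : ℝ) (k : ℕ) :
    (2 * k + 3) * ∫ y in -t..t, besselArg t y ^ (k + 1) =
      (k + 1) * t ^ 2 / 2 * ∫ y in -t..t, besselArg t y ^ k := by
  have hderiv : ∀ y, HasDerivAt (fun y => y * besselArg t y ^ (k + 1))
      ((2 * k + 3) * besselArg t y ^ (k + 1) - (k + 1) * t ^ 2 / 2 * besselArg t y ^ k) y := by
    intro y
    refine ((hasDerivAt_id y).mul ((hasDerivAt_besselArg t y).pow (k + 1))).congr_deriv ?_
    simp only [Pi.pow_apply, besselArg, id, Nat.add_sub_cancel, pow_succ]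
    push_cast
    ring
  have hftc := integral_eq_sub_of_hasDerivAt (a := -t) (b := t) (fun y _ => hderiv y)
    ((Continuous.intervalIntegrable (by fun_prop)) _ _)
  rw [integral_sub ((Continuous.intervalIntegrable (by fun_prop) _ _).const_mul _)
    ((Continuous.intervalIntegrable (by fun_prop) _ _).const_mul _), integral_const_mul,
    integral_const_mul] at hftc
  simpa [besselArg, sub_eq_zero] using hftc

lemma integral_besselArg_pow (t : ℝ) (k : ℕ) :
    ∫ y in -t..t, besselArg t y ^ k = 2 * (k ! : ℝ) ^ 2 * t ^ (2 * k + 1) / (2 * k + 1)! := by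
  induction k with
  | zero => simp; ring
  | succ k ih =>
    rw [← mul_left_cancel_iff_of_pos (show (0 : ℝ) < 2 * k + 3 by positivity),
      integral_besselArg_pow_succ, ih]
    push_cast [show 2 * (k + 1) + 1 = 2 * k + 1 + 1 + 1 by ring, Nat.factorial_succ]
    field_simp
    ring

lemma hasSum_integral_besselSeries_comp (n : ℕ) {f : ℝ → ℝ} (hf : Continuous f) {a b R : ℝ}
    (hfR : ∀ y ∈ Set.uIcc a b, |f y| ≤ R) :
    HasSum (fun k : ℕ => (∫ y in a..b, f y ^ k) / ((k ! : ℝ) * (k + n)!))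
      (∫ y in a..b, besselSeries n (f y)) := by
  simp_rw [← integral_div]
  refine hasSum_integral_of_dominated_convergence (fun k _ => R ^ k / k !)
    (fun k => (Continuous.aestronglyMeasurable (by fun_prop)))
    (fun k => MeasureTheory.ae_of_all _ fun y hy => ?_)
    (MeasureTheory.ae_of_all _ fun _ _ => Real.summable_pow_div_factorial R)
    intervalIntegrable_const (MeasureTheory.ae_of_all _ fun y _ => hasSum_besselSeries n (f y))
  refine (abs_pow_div_factorial_mul_factorial_le n k (f y)).trans ?_
  gcongr
  exact hfR y (Set.uIoc_subset_uIcc hy)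

lemma hasSum_integral_besselSeries_besselArg (n : ℕ) (s t : ℝ) :
    HasSum (fun k : ℕ => s ^ k * (2 * k ! * t ^ (2 * k + 1) / ((k + n)! * (2 * k + 1)!)))
      (∫ y in -t..t, besselSeries n (s * besselArg t y)) := by
  refine (hasSum_integral_besselSeries_comp n (f := fun y => s * besselArg t y) (by fun_prop)
    (R := |s| * (t ^ 2 / 4)) fun y hy => ?_).congr_fun fun k => ?_
  · have hy2 : y ^ 2 ≤ t ^ 2 := by
      rw [Set.mem_uIcc] at hy
      rcases hy with h | h <;> nlinarith
    rw [abs_mul, besselArg, abs_of_nonneg (show 0 ≤ (t ^ 2 - y ^ 2) / 4 by nlinarith)]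
    gcongr
    nlinarith
  · simp only [mul_pow, integral_const_mul, integral_besselArg_pow]
    field_simp

lemma integral_besselSeries_zero_neg_besselArg (t : ℝ) :
    ∫ y in -t..t, besselSeries 0 (-besselArg t y) = 2 * Real.sin t := by
  have h := hasSum_integral_besselSeries_besselArg 0 (-1) t
  simp only [neg_one_mul] at h
  refine h.unique (((Real.hasSum_sin t).mul_left 2).congr_fun fun k => ?_)
  rw [add_zero]
  field_simp

lemma mul_integral_besselSeries_one_besselArg (t : ℝ) :
    t * ∫ y in -t..t, besselSeries 1 (besselArg t y) = 4 * (Real.cosh t - 1) := by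
  have h := (hasSum_integral_besselSeries_besselArg 1 1 t).mul_left t
  simp only [one_mul] at h
  have hcosh := (hasSum_nat_add_iff' 1).mpr (Real.hasSum_cosh t)
  simp only [Finset.sum_range_one, mul_zero, pow_zero, Nat.factorial_zero, Nat.cast_one,
    div_one] at hcosh
  refine h.unique ((hcosh.mul_left 4).congr_fun fun k => ?_)
  push_cast [one_pow, show 2 * (k + 1) = 2 * k + 1 + 1 by ring, Nat.factorial_succ]
  field_simp
  ring

lemma integral_mul_besselSeries_besselArg (n : ℕ) (t : ℝ) :
    ∫ y in -t..t, y * besselSeries n (besselArg t y) = 0 := by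
  have h := integral_comp_neg (a := -t) (b := t) fun y => y * besselSeries n (besselArg t y)
  simp only [besselArg_neg, neg_mul, integral_neg, neg_neg] at h
  linarith

/-- The `k`-th term of the `F₂` part cancels the `(k+1)`-st term of the `F₁` part up to the
`k`-th terms of `sinh t - t` and `sin t - t`. -/
lemma integral_besselSeries_one_add_two_besselArg (t : ℝ) :
    ((∫ y in -t..t, besselSeries 1 (besselArg t y)) +
        ∫ y in -t..t, besselSeries 1 (-besselArg t y)) / 4 +
      t ^ 2 / 8 * ((∫ y in -t..t, besselSeries 2 (besselArg t y)) -
        ∫ y in -t..t, besselSeries 2 (-besselArg t y)) =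
      Real.sinh t + Real.sin t - t := by
  have h1 := (hasSum_nat_add_iff' 1).mpr ((hasSum_integral_besselSeries_besselArg 1 1 t).add
    (hasSum_integral_besselSeries_besselArg 1 (-1) t))
  have h2 := (hasSum_integral_besselSeries_besselArg 2 1 t).sub
    (hasSum_integral_besselSeries_besselArg 2 (-1) t)
  have hs := ((hasSum_nat_add_iff' 1).mpr (Real.hasSum_sinh t)).add
    ((hasSum_nat_add_iff' 1).mpr (Real.hasSum_sin t))
  have key := ((h1.div_const 4).add (h2.mul_left (t ^ 2 / 8))).unique (hs.congr_fun fun k => ?_)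
  · simp only [one_mul, neg_one_mul, Finset.sum_range_one] at key
    norm_num at key
    linear_combination key
  · push_cast [one_pow, pow_succ (-1 : ℝ), show 2 * (k + 1) + 1 = 2 * k + 1 + 1 + 1 by ring,
      show k + 1 + 1 = k + 2 by ring, Nat.factorial_succ]
    field_simp
    ring

noncomputable def erlang2Gc (t y : ℝ) : ℝ :=
  -besselJ0 (Real.sqrt (t ^ 2 - y ^ 2)) / 2 +
    (t + y) / (2 * Real.sqrt (t ^ 2 - y ^ 2)) * besselI1 (Real.sqrt (t ^ 2 - y ^ 2)) -
    y ^ 2 / (2 * (t ^ 2 - y ^ 2) ^ ((3 : ℝ) / 2)) *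
      (besselI1 (Real.sqrt (t ^ 2 - y ^ 2)) + besselJ1 (Real.sqrt (t ^ 2 - y ^ 2))) +
    t ^ 2 / (4 * (t ^ 2 - y ^ 2)) *
      (besselI0 (Real.sqrt (t ^ 2 - y ^ 2)) + besselI2 (Real.sqrt (t ^ 2 - y ^ 2)) +
        besselJ0 (Real.sqrt (t ^ 2 - y ^ 2)) - besselJ2 (Real.sqrt (t ^ 2 - y ^ 2)))

lemma erlang2Gc_eq (t y : ℝ) (hy : y ^ 2 < t ^ 2) :
    erlang2Gc t y =
      -besselSeries 0 (-besselArg t y) / 2 + t / 4 * besselSeries 1 (besselArg t y) +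
        y * besselSeries 1 (besselArg t y) / 4 +
        ((besselSeries 1 (besselArg t y) + besselSeries 1 (-besselArg t y)) / 4 +
          t ^ 2 / 8 * (besselSeries 2 (besselArg t y) - besselSeries 2 (-besselArg t y))) := by
  have hpos : 0 < t ^ 2 - y ^ 2 := sub_pos.mpr hy
  set r := Real.sqrt (t ^ 2 - y ^ 2) with hr
  have hr0 : r ≠ 0 := (Real.sqrt_pos.mpr hpos).ne'
  have harg : (r / 2) ^ 2 = besselArg t y := by
    rw [div_pow, Real.sq_sqrt hpos.le, besselArg]
    norm_num
  have hrpow : (t ^ 2 - y ^ 2) ^ ((3 : ℝ) / 2) = (t ^ 2 - y ^ 2) * r := by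
    rw [show (3 : ℝ) / 2 = 1 + 1 / 2 by norm_num, Real.rpow_add hpos, Real.rpow_one, hr,
      Real.sqrt_eq_rpow]
  have hsum : besselI0 r + besselI2 r + besselJ0 r - besselJ2 r =
      besselSeries 1 (besselArg t y) + besselSeries 1 (-besselArg t y) +
        2 * besselArg t y * (besselSeries 2 (besselArg t y) - besselSeries 2 (-besselArg t y)) := by
    have hI := besselSeries_sub_mul_besselSeries_add_two 0 (besselArg t y)
    have hJ := besselSeries_sub_mul_besselSeries_add_two 0 (-besselArg t y)
    rw [besselI0_eq, besselI2_eq, besselJ0_eq, besselJ2_eq, harg]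
    push_cast at hI hJ
    linear_combination hI + hJ
  rw [erlang2Gc, ← hr, hsum, hrpow, besselJ0_eq, besselI1_eq, besselJ1_eq, harg]
  rw [besselArg]
  field_simp
  ring

theorem erlang2_gc_mass_general (t : ℝ) :
    (∫ y in (-t)..t, (fun y : ℝ =>
      -besselJ0 (Real.sqrt (t ^ 2 - y ^ 2)) / 2 +
        (t + y) / (2 * Real.sqrt (t ^ 2 - y ^ 2)) * besselI1 (Real.sqrt (t ^ 2 - y ^ 2)) -
        y ^ 2 / (2 * (t ^ 2 - y ^ 2) ^ ((3 : ℝ) / 2)) *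
          (besselI1 (Real.sqrt (t ^ 2 - y ^ 2)) + besselJ1 (Real.sqrt (t ^ 2 - y ^ 2))) +
        t ^ 2 / (4 * (t ^ 2 - y ^ 2)) *
          (besselI0 (Real.sqrt (t ^ 2 - y ^ 2)) + besselI2 (Real.sqrt (t ^ 2 - y ^ 2)) +
            besselJ0 (Real.sqrt (t ^ 2 - y ^ 2)) - besselJ2 (Real.sqrt (t ^ 2 - y ^ 2)))) y) = Real.exp t - 1 - t := by
  have hint : ∀ f : ℝ → ℝ, Continuous f → IntervalIntegrable f MeasureTheory.volume (-t) t :=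
    fun f hf => hf.intervalIntegrable _ _
  change ∫ y in -t..t, erlang2Gc t y = _
  rw [integral_congr_uIoo fun y hy => erlang2Gc_eq t y ?_]
  · rw [integral_add (hint _ (by fun_prop)) (hint _ (by fun_prop)),
      integral_add (hint _ (by fun_prop)) (hint _ (by fun_prop)),
      integral_add (hint _ (by fun_prop)) (hint _ (by fun_prop)),
      integral_add (hint _ (by fun_prop)) (hint _ (by fun_prop))]
    simp only [integral_div, integral_neg, integral_const_mul]
    rw [integral_add (hint _ (by fun_prop)) (hint _ (by fun_prop)),
      integral_sub (hint _ (by fun_prop)) (hint _ (by fun_prop))]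
    linear_combination (-1 / 2) * integral_besselSeries_zero_neg_besselArg t +
      1 / 4 * mul_integral_besselSeries_one_besselArg t +
      1 / 4 * integral_mul_besselSeries_besselArg 1 t +
      integral_besselSeries_one_add_two_besselArg t + Real.cosh_add_sinh t
  · obtain ⟨hlo, hhi⟩ := hy
    rw [min_lt_iff] at hlo
    rw [lt_max_iff] at hhi
    rcases hlo with hlo | hlo <;> rcases hhi with hhi | hhi <;> nlinarith

/-- Normalization of the continuous part of the 2-Erlang telegraph density:
`∫₋ₜᵗ g_c(t,y) dy = eᵗ − 1 − t`. -/
theorem erlang2_gc_mass (t : ℝ) (ht : 0 < t) :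
    (∫ y in (-t)..t, (fun y : ℝ =>
      -besselJ0 (Real.sqrt (t ^ 2 - y ^ 2)) / 2 +
        (t + y) / (2 * Real.sqrt (t ^ 2 - y ^ 2)) * besselI1 (Real.sqrt (t ^ 2 - y ^ 2)) -
        y ^ 2 / (2 * (t ^ 2 - y ^ 2) ^ ((3 : ℝ) / 2)) *
          (besselI1 (Real.sqrt (t ^ 2 - y ^ 2)) + besselJ1 (Real.sqrt (t ^ 2 - y ^ 2))) +
        t ^ 2 / (4 * (t ^ 2 - y ^ 2)) *
          (besselI0 (Real.sqrt (t ^ 2 - y ^ 2)) + besselI2 (Real.sqrt (t ^ 2 - y ^ 2)) +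
            besselJ0 (Real.sqrt (t ^ 2 - y ^ 2)) - besselJ2 (Real.sqrt (t ^ 2 - y ^ 2)))) y) = Real.exp t - 1 - t :=
  erlang2_gc_mass_general t
end
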